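/- arXiv:1902.01134 — 4 statements merged into one kernel-verified Lean document; each statement's English description precedes it below -/
import Mathlib

section
/- Let E ⊆ ℂ^n be a compact set with positive homogeneous capacity in the sense of Siciak (Ψ_E^* bounded above on the unit sphere of ℂ^n). Let C > 0, ρ > 0, σ : E → [0,∞) be bounded above, and suppose for every ζ ∈ E there is an entire φ_ζ : ℂ → ℂ with |φ_ζ(z)| ≤ C·exp(σ(ζ)|z|^ρ) for all z ∈ ℂ, and for every k ∈ ℕ a homogeneous polynomial P_k of degree k on ℂ^n with φ_ζ^{(k)}(0)/k! = P_k(ζ) for all ζ ∈ E. Let F = Σ_{k=0}^∞ P_k be the resulting entire extension and set γ = σ^{1/ρ}. Then for every ε > 0 there exists C_ε > 0 such that |F(ζ)| ≤ C_ε·exp(Ψ_{E,γ}(ζ)^ρ + ε|ζ|^ρ) for all ζ ∈ ℂ^n. Consequently F has order at most ρ, its type with respect to the growth order ρ is at most α^ρ where α = sup_{|ζ|=1} Ψ_{E,γ}^*(ζ), and its indicator function satisfies i_F(ζ) ≤ Ψ_{E,γ}(ζ)^ρ for all ζ ∈ ℂ^n. -/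
/-!
Cauchy's estimate on the circle of radius `(k / (ρ σ(ξ)))^{1/ρ}` bounds the Taylor coefficients
of `φ_ξ`, hence `|P_k|` on `E`, by `C (eρ/k)^{k/ρ} γ^k`. After division by that constant `P_k` is
admissible in the definition of `Ψ_{E,γ}`, so `|P_k(ζ)| ≤ C (eρ/k)^{k/ρ} Ψ_{E,γ}(ζ)^k` everywhere;
positive capacity and a bounded `σ` make `Ψ_{E,γ}(ζ) ≤ A|ζ|`. Since
`(eρ/k)^{k/ρ} x^k ≤ exp(x^ρ)`, applied to `x = τΨ` with `τ > 1` so close to `1` that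
`(τΨ)^ρ ≤ Ψ^ρ + ε|ζ|^ρ`, the series is dominated by `exp(Ψ^ρ + ε|ζ|^ρ)` times a geometric series
of ratio `1/τ`. Order, type and indicator follow on taking logarithms, the indicator through the
homogeneity `Ψ(tζ) = |t| Ψ(ζ)`.
-/

open scoped ENNReal RealInnerProductSpace BigOperators
open Filter MeasureTheory

noncomputable section

/-- ℂⁿ with the hermitian (euclidean) norm. -/
abbrev Cn (n : ℕ) := EuclideanSpace ℂ (Fin n)
/-- ℝⁿ with the euclidean norm. -/
abbrev Rn (n : ℕ) := EuclideanSpace ℝ (Fin n)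

/-- The inclusion ℝⁿ ⊆ ℂⁿ. -/
def toCn {n : ℕ} (x : Rn n) : Cn n := WithLp.toLp 2 (fun i => (x i : ℂ))

/-- Evaluation of a polynomial on ℂⁿ at a point of ℂⁿ. -/
def evalP {n : ℕ} (p : MvPolynomial (Fin n) ℂ) (ζ : Cn n) : ℂ :=
  MvPolynomial.eval (fun i => ζ i) p

/-- Siciak's homogeneous extremal function with weight `γ`:
`Ψ_{E,γ}(ζ) = sup{ |p(ζ)|^{1/k} : p homogeneous of degree k ≥ 1, |p|^{1/k} ≤ γ on E }`. -/
def siciak {n : ℕ} (E : Set (Cn n)) (γ : Cn n → ℝ) (ζ : Cn n) : ℝ≥0∞ :=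
  ⨆ (p : MvPolynomial (Fin n) ℂ) (k : ℕ) (_ : p.IsHomogeneous k) (_ : 1 ≤ k)
    (_ : ∀ ξ ∈ E, ‖evalP p ξ‖ ^ (1 / (k : ℝ)) ≤ γ ξ),
    ENNReal.ofReal (‖evalP p ζ‖ ^ (1 / (k : ℝ)))

/-- The upper semicontinuous regularization `Ψ^*(ζ) = limsup_{ϑ → ζ} Ψ(ϑ)`. -/
def siciakStar {n : ℕ} (E : Set (Cn n)) (γ : Cn n → ℝ) (ζ : Cn n) : ℝ≥0∞ :=
  Filter.limsup (siciak E γ) (nhds ζ)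

/-- `E` has positive homogeneous capacity in the sense of Siciak:
`Ψ_E^*` is bounded above on the unit sphere of ℂⁿ. -/
def PosHomCapacity {n : ℕ} (E : Set (Cn n)) : Prop :=
  ∃ M : ℝ, ∀ ζ : Cn n, ‖ζ‖ = 1 → siciakStar E (fun _ => 1) ζ ≤ ENNReal.ofReal M

end

noncomputable section

/-- `M_F(r) = sup_{|ζ| ≤ r} |F(ζ)|`. -/
def maxMod {n : ℕ} (F : Cn n → ℂ) (r : ℝ) : ℝ :=
  sSup ((fun ζ => ‖F ζ‖) '' Metric.closedBall (0 : Cn n) r)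


section HomogeneousPolynomial

variable {n k : ℕ} {p : MvPolynomial (Fin n) ℂ}

lemma continuous_evalP (p : MvPolynomial (Fin n) ℂ) : Continuous (evalP p) :=
  (MvPolynomial.continuous_eval p).comp (PiLp.continuous_ofLp 2 _)

lemma evalP_C_mul (a : ℂ) (p : MvPolynomial (Fin n) ℂ) (ζ : Cn n) :
    evalP (MvPolynomial.C a * p) ζ = a * evalP p ζ := by
  simp [evalP]

lemma evalP_smul_of_isHomogeneous (hp : p.IsHomogeneous k) (c : ℂ) (ζ : Cn n) :
    evalP p (c • ζ) = c ^ k * evalP p ζ := by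
  simp only [evalP, PiLp.smul_apply, smul_eq_mul, MvPolynomial.eval_eq, Finset.mul_sum]
  refine Finset.sum_congr rfl fun d hd => ?_
  have hdeg : ∑ i ∈ d.support, d i = k := by
    rw [← hp (MvPolynomial.mem_support_iff.mp hd)]
    simp [Finsupp.weight_apply, Finsupp.sum]
  simp_rw [mul_pow, Finset.prod_mul_distrib, Finset.prod_pow_eq_pow_sum, hdeg]
  ring

lemma norm_pow_mul_rpow_one_div (hk : k ≠ 0) (a z : ℂ) :
    ‖a ^ k * z‖ ^ (1 / (k : ℝ)) = ‖a‖ * ‖z‖ ^ (1 / (k : ℝ)) := by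
  rw [norm_mul, norm_pow, Real.mul_rpow (by positivity) (norm_nonneg _), one_div,
    Real.pow_rpow_inv_natCast (norm_nonneg _) hk]

end HomogeneousPolynomial

section Siciak

variable {n : ℕ} {E : Set (Cn n)} {γ γ' : Cn n → ℝ}

lemma le_siciak {p : MvPolynomial (Fin n) ℂ} {k : ℕ} (hp : p.IsHomogeneous k) (hk : 1 ≤ k)
    (hadm : ∀ ξ ∈ E, ‖evalP p ξ‖ ^ (1 / (k : ℝ)) ≤ γ ξ) (ζ : Cn n) :
    ENNReal.ofReal (‖evalP p ζ‖ ^ (1 / (k : ℝ))) ≤ siciak E γ ζ :=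
  le_iSup_of_le p <| le_iSup_of_le k <| le_iSup_of_le hp <| le_iSup_of_le hk <|
    le_iSup_of_le hadm le_rfl

lemma siciak_le {ζ : Cn n} {B : ℝ≥0∞}
    (h : ∀ (p : MvPolynomial (Fin n) ℂ) (k : ℕ), p.IsHomogeneous k → 1 ≤ k →
      (∀ ξ ∈ E, ‖evalP p ξ‖ ^ (1 / (k : ℝ)) ≤ γ ξ) →
        ENNReal.ofReal (‖evalP p ζ‖ ^ (1 / (k : ℝ))) ≤ B) :
    siciak E γ ζ ≤ B :=
  iSup_le fun p => iSup_le fun k => iSup_le fun hp => iSup_le fun hk => iSup_le (h p k hp hk)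

lemma siciak_smul (E : Set (Cn n)) (γ : Cn n → ℝ) (c : ℂ) (ζ : Cn n) :
    siciak E γ (c • ζ) = ENNReal.ofReal ‖c‖ * siciak E γ ζ := by
  simp only [siciak, ENNReal.mul_iSup]
  refine iSup_congr fun p => iSup_congr fun k => iSup_congr fun hp => iSup_congr fun hk =>
    iSup_congr fun _ => ?_
  rw [evalP_smul_of_isHomogeneous hp, norm_pow_mul_rpow_one_div (by omega),
    ENNReal.ofReal_mul (norm_nonneg _)]

lemma siciak_le_siciakStar (E : Set (Cn n)) (γ : Cn n → ℝ) (ζ : Cn n) :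
    siciak E γ ζ ≤ siciakStar E γ ζ := by
  rw [siciakStar, limsup_eq_iInf_iSup]
  exact le_iInf₂ fun s hs => le_iSup₂_of_le ζ (mem_of_mem_nhds hs) le_rfl

lemma siciak_mono_weight (h : ∀ ξ ∈ E, γ ξ ≤ γ' ξ) (ζ : Cn n) :
    siciak E γ ζ ≤ siciak E γ' ζ :=
  siciak_le fun _ _ hp hk hadm => le_siciak hp hk (fun ξ hξ => (hadm ξ hξ).trans (h ξ hξ)) ζ

lemma siciak_const_mul_weight_le {G : ℝ} (hG : 0 < G) (ζ : Cn n) :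
    siciak E (fun ξ => G * γ ξ) ζ ≤ ENNReal.ofReal G * siciak E γ ζ := by
  refine siciak_le fun p k hp hk hadm => ?_
  set q := MvPolynomial.C (((G⁻¹ : ℝ) : ℂ) ^ k) * p
  have hq : ∀ ϑ, ‖evalP q ϑ‖ ^ (1 / (k : ℝ)) = G⁻¹ * ‖evalP p ϑ‖ ^ (1 / (k : ℝ)) := fun ϑ => by
    rw [evalP_C_mul, norm_pow_mul_rpow_one_div (by omega), Complex.norm_real,
      Real.norm_of_nonneg (inv_nonneg.2 hG.le)]
  have hq_adm : ∀ ξ ∈ E, ‖evalP q ξ‖ ^ (1 / (k : ℝ)) ≤ γ ξ := fun ξ hξ => by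
    rw [hq, inv_mul_le_iff₀ hG]
    exact hadm ξ hξ
  calc ENNReal.ofReal (‖evalP p ζ‖ ^ (1 / (k : ℝ)))
      = ENNReal.ofReal G * ENNReal.ofReal (‖evalP q ζ‖ ^ (1 / (k : ℝ))) := by
        rw [← ENNReal.ofReal_mul hG.le, hq, mul_inv_cancel_left₀ hG.ne']
    _ ≤ ENNReal.ofReal G * siciak E γ ζ := by
        gcongr
        exact le_siciak (hp.C_mul _) hk hq_adm ζ

lemma norm_evalP_le_mul_siciak_pow {p : MvPolynomial (Fin n) ℂ} {k : ℕ} {c : ℝ} {ζ : Cn n}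
    (hp : p.IsHomogeneous k) (hk : 1 ≤ k) (hc : 0 < c) (hγ : ∀ ξ ∈ E, 0 ≤ γ ξ)
    (hpE : ∀ ξ ∈ E, ‖evalP p ξ‖ ≤ c * γ ξ ^ k) (hfin : siciak E γ ζ ≠ ⊤) :
    ‖evalP p ζ‖ ≤ c * (siciak E γ ζ).toReal ^ k := by
  have hk0 : k ≠ 0 := by omega
  set G := c ^ ((k : ℝ)⁻¹)
  have hG : 0 < G := by positivity
  have hadm : ∀ ξ ∈ E, ‖evalP p ξ‖ ^ (1 / (k : ℝ)) ≤ G * γ ξ := fun ξ hξ => by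
    calc ‖evalP p ξ‖ ^ (1 / (k : ℝ)) ≤ (c * γ ξ ^ k) ^ (1 / (k : ℝ)) := by
          gcongr
          exact hpE ξ hξ
      _ = G * γ ξ := by
          rw [Real.mul_rpow hc.le (pow_nonneg (hγ ξ hξ) k), one_div,
            Real.pow_rpow_inv_natCast (hγ ξ hξ) hk0]
  have hroot : ‖evalP p ζ‖ ^ (1 / (k : ℝ)) ≤ G * (siciak E γ ζ).toReal := by
    rw [← ENNReal.ofReal_le_ofReal_iff (by positivity), ENNReal.ofReal_mul hG.le,
      ENNReal.ofReal_toReal hfin]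
    exact (le_siciak hp hk hadm ζ).trans (siciak_const_mul_weight_le hG ζ)
  calc ‖evalP p ζ‖ = (‖evalP p ζ‖ ^ (1 / (k : ℝ))) ^ k := by
        rw [one_div, Real.rpow_inv_natCast_pow (norm_nonneg _) hk0]
    _ ≤ (G * (siciak E γ ζ).toReal) ^ k := by gcongr
    _ = c * (siciak E γ ζ).toReal ^ k := by
        rw [mul_pow, Real.rpow_inv_natCast_pow hc.le hk0]

lemma siciak_le_ofReal_norm_mul {L : ℝ≥0∞} (h : ∀ u : Cn n, ‖u‖ = 1 → siciak E γ u ≤ L)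
    (ζ : Cn n) : siciak E γ ζ ≤ ENNReal.ofReal ‖ζ‖ * L := by
  rcases eq_or_ne ζ 0 with rfl | hζ
  · simpa using siciak_smul E γ 0 0
  have hnz : ‖ζ‖ ≠ 0 := norm_ne_zero_iff.mpr hζ
  set u : Cn n := ((‖ζ‖ : ℂ))⁻¹ • ζ
  have hu : ‖u‖ = 1 := by simp [u, norm_smul, hnz]
  have hζu : ζ = ((‖ζ‖ : ℝ) : ℂ) • u := by
    rw [smul_smul, mul_inv_cancel₀ (by exact_mod_cast hnz), one_smul]
  rw [hζu, siciak_smul, Complex.norm_real, norm_norm, ← hζu]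
  gcongr
  exact h u hu

lemma PosHomCapacity.exists_siciak_le (hcap : PosHomCapacity E) {G : ℝ}
    (hγG : ∀ ξ ∈ E, γ ξ ≤ G) :
    ∃ L : ℝ≥0∞, L ≠ ⊤ ∧ ∀ ζ : Cn n, siciak E γ ζ ≤ ENNReal.ofReal ‖ζ‖ * L := by
  obtain ⟨M, hM⟩ := hcap
  have hG : 0 < max G 1 := by positivity
  refine ⟨ENNReal.ofReal (max G 1) * ENNReal.ofReal M, by finiteness,
    siciak_le_ofReal_norm_mul fun u hu => ?_⟩
  calc siciak E γ u ≤ siciak E (fun _ => max G 1 * 1) u :=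
        siciak_mono_weight (fun ξ hξ => by simpa using (hγG ξ hξ).trans (le_max_left G 1)) u
    _ ≤ ENNReal.ofReal (max G 1) * siciak E (fun _ => 1) u := siciak_const_mul_weight_le hG u
    _ ≤ ENNReal.ofReal (max G 1) * ENNReal.ofReal M := by
        gcongr
        exact (siciak_le_siciakStar E _ u).trans (hM u hu)

end Siciak

/-- With `m = k / ρ` and `u = x^ρ / m` the left side is `(e u)^m`, and `e u ≤ eᵘ`. -/
lemma rpow_mul_pow_le_exp_rpow {ρ : ℝ} (hρ : 0 < ρ) {k : ℕ} (hk : k ≠ 0) {x : ℝ} (hx : 0 ≤ x) :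
    (Real.exp 1 * ρ / k) ^ ((k : ℝ) / ρ) * x ^ k ≤ Real.exp (x ^ ρ) := by
  have hm : 0 < (k : ℝ) / ρ := by positivity
  have hxk : x ^ k = (x ^ ρ) ^ ((k : ℝ) / ρ) := by
    rw [← Real.rpow_mul hx, mul_div_cancel₀ _ hρ.ne', Real.rpow_natCast]
  calc (Real.exp 1 * ρ / k) ^ ((k : ℝ) / ρ) * x ^ k
      = (Real.exp 1 * (x ^ ρ / ((k : ℝ) / ρ))) ^ ((k : ℝ) / ρ) := by
        rw [hxk, ← Real.mul_rpow (by positivity) (by positivity)]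
        congr 1
        field_simp
    _ ≤ Real.exp (x ^ ρ / ((k : ℝ) / ρ)) ^ ((k : ℝ) / ρ) := by
        gcongr
        exact Real.exp_one_mul_le_exp
    _ = Real.exp (x ^ ρ) := by
        rw [← Real.exp_mul, div_mul_cancel₀ _ hm.ne']

/-- Cauchy's estimate on the circle of radius `(k / (ρ s))^{1/ρ}`, where `C exp(s r^ρ) / r^k` is
minimal; for `s = 0` the function is constant by Liouville's theorem. -/
lemma norm_iteratedDeriv_div_factorial_le {f : ℂ → ℂ} (hf : Differentiable ℂ f) {C s ρ : ℝ}
    (hs : 0 ≤ s) (hρ : 0 < ρ) (hfb : ∀ z, ‖f z‖ ≤ C * Real.exp (s * ‖z‖ ^ ρ)) {k : ℕ}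
    (hk : k ≠ 0) :
    ‖iteratedDeriv k f 0‖ / k.factorial
      ≤ C * (Real.exp 1 * ρ / k) ^ ((k : ℝ) / ρ) * (s ^ (1 / ρ)) ^ k := by
  rcases hs.eq_or_lt' with rfl | hs_pos
  · have hb : Bornology.IsBounded (Set.range f) :=
      isBounded_iff_forall_norm_le.2 ⟨C, by simpa using hfb⟩
    have hconst : f = fun _ => f 0 := funext fun z => hf.apply_eq_apply_of_bounded hb z 0
    rw [hconst, iteratedDeriv_const, if_neg hk, Real.zero_rpow (by positivity), zero_pow hk]
    simp
  set m : ℝ := k / ρ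
  set t : ℝ := s ^ (1 / ρ)
  have hm : 0 < m := by positivity
  have ht : 0 < t := by positivity
  have htρ : t ^ ρ = s := by simp only [t, one_div, Real.rpow_inv_rpow hs hρ.ne']
  set r : ℝ := m ^ (1 / ρ) / t
  have hr : 0 < r := by positivity
  have hrk : r ^ k = m ^ m / t ^ k := by
    rw [div_pow, ← Real.rpow_natCast (m ^ (1 / ρ)), ← Real.rpow_mul hm.le]
    congr 2
    simp only [m]
    ring
  have hsphere : ∀ z ∈ Metric.sphere (0 : ℂ) r, ‖f z‖ ≤ C * Real.exp m := fun z hz => by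
    have hsr : s * ‖z‖ ^ ρ = m := by
      rw [mem_sphere_zero_iff_norm.1 hz, Real.div_rpow (by positivity) ht.le, htρ, one_div,
        Real.rpow_inv_rpow hm.le hρ.ne']
      field_simp
    simpa [hsr] using hfb z
  have hcauchy := Complex.norm_iteratedDeriv_le_of_forall_mem_sphere_norm_le k hr
    hf.diffContOnCl hsphere
  calc ‖iteratedDeriv k f 0‖ / k.factorial ≤ C * Real.exp m / r ^ k := by
        rw [div_le_iff₀ (by positivity)]
        calc ‖iteratedDeriv k f 0‖ ≤ k.factorial * (C * Real.exp m) / r ^ k := hcauchy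
          _ = C * Real.exp m / r ^ k * k.factorial := by ring
    _ = C * (Real.exp 1 * ρ / k) ^ m * t ^ k := by
        have he : Real.exp 1 * ρ / k = Real.exp 1 / m := by
          simp only [m]
          field_simp
        rw [hrk, he, Real.div_rpow (Real.exp_pos 1).le hm.le, Real.exp_one_rpow]
        field_simp

open Finset in
lemma norm_le_of_tendsto_sum_of_norm_le_geometric {V : Type*} [NormedAddCommGroup V]
    {a : ℕ → V} {S : V} (hS : Tendsto (fun N => ∑ k ∈ range N, a k) atTop (nhds S))
    {B q : ℝ} (hq0 : 0 ≤ q) (hq1 : q < 1) (ha : ∀ k, ‖a k‖ ≤ B * q ^ k) :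
    ‖S‖ ≤ B / (1 - q) := by
  have hB : 0 ≤ B := by simpa using (norm_nonneg _).trans (ha 0)
  refine le_of_tendsto hS.norm (Eventually.of_forall fun N => ?_)
  calc ‖∑ k ∈ range N, a k‖ ≤ ∑ k ∈ range N, B * q ^ k :=
        (norm_sum_le _ _).trans (sum_le_sum fun k _ => ha k)
    _ = B * ∑ k ∈ Ico 0 N, q ^ k := by rw [mul_sum, range_eq_Ico]
    _ ≤ B * (q ^ 0 / (1 - q)) := by
        gcongr
        exact geom_sum_Ico_le_of_lt_one hq0 hq1
    _ = B / (1 - q) := by ring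

lemma exists_one_lt_mul_rpow_le {ρ A ε : ℝ} (hρ : 0 < ρ) (hA : 0 ≤ A) (hε : 0 < ε) :
    ∃ τ > 1, ∀ x y : ℝ, 0 ≤ x → 0 ≤ y → x ≤ A * y → (τ * x) ^ ρ ≤ x ^ ρ + ε * y ^ ρ := by
  set δ := ε / (A ^ ρ + 1)
  have hδ : 0 < δ := by positivity
  have hδA : δ * A ^ ρ ≤ ε := by
    rw [div_mul_eq_mul_div, div_le_iff₀ (by positivity)]
    nlinarith
  refine ⟨(1 + δ) ^ (1 / ρ), Real.one_lt_rpow (by linarith) (by positivity),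
    fun x y hx hy hxy => ?_⟩
  have hxρ : x ^ ρ ≤ A ^ ρ * y ^ ρ := by
    rw [← Real.mul_rpow hA hy]
    gcongr
  rw [Real.mul_rpow (by positivity) hx, one_div, Real.rpow_inv_rpow (by positivity) hρ.ne']
  nlinarith [Real.rpow_nonneg hy ρ]

lemma norm_le_exp_of_norm_term_le {V : Type*} [NormedAddCommGroup V] {a : ℕ → V → ℂ}
    {F : V → ℂ} {Ψ : V → ℝ} {C ρ A D : ℝ} (hC : 0 < C) (hρ : 0 < ρ) (hA : 0 ≤ A)
    (hΨ0 : ∀ ζ, 0 ≤ Ψ ζ) (hΨA : ∀ ζ, Ψ ζ ≤ A * ‖ζ‖) (ha0 : ∀ ζ, ‖a 0 ζ‖ ≤ D)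
    (ha : ∀ k ≠ 0, ∀ ζ, ‖a k ζ‖ ≤ C * (Real.exp 1 * ρ / k) ^ ((k : ℝ) / ρ) * Ψ ζ ^ k)
    (hF : ∀ ζ, Tendsto (fun N => ∑ k ∈ Finset.range N, a k ζ) atTop (nhds (F ζ)))
    {ε : ℝ} (hε : 0 < ε) :
    ∃ Cε > 0, ∀ ζ, ‖F ζ‖ ≤ Cε * Real.exp (Ψ ζ ^ ρ + ε * ‖ζ‖ ^ ρ) := by
  obtain ⟨τ, hτ1, hτ⟩ := exists_one_lt_mul_rpow_le hρ hA hε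
  have hτ0 : 0 < τ := by linarith
  have hq1 : τ⁻¹ < 1 := inv_lt_one_of_one_lt₀ hτ1
  have hD : 0 ≤ D := (norm_nonneg _).trans (ha0 0)
  refine ⟨(D + C) / (1 - τ⁻¹), div_pos (by positivity) (by linarith), fun ζ => ?_⟩
  set X := Ψ ζ ^ ρ + ε * ‖ζ‖ ^ ρ
  have hX : 1 ≤ Real.exp X :=
    Real.one_le_exp (add_nonneg (Real.rpow_nonneg (hΨ0 ζ) ρ) (by positivity))
  have hterm : ∀ k, ‖a k ζ‖ ≤ (D + C) * Real.exp X * τ⁻¹ ^ k := by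
    intro k
    rcases eq_or_ne k 0 with rfl | hk
    · nlinarith [ha0 ζ]
    calc ‖a k ζ‖ ≤ C * τ⁻¹ ^ k * ((Real.exp 1 * ρ / k) ^ ((k : ℝ) / ρ) * (τ * Ψ ζ) ^ k) := by
          refine (ha k hk ζ).trans_eq ?_
          rw [mul_pow, inv_pow]
          field_simp
      _ ≤ C * τ⁻¹ ^ k * Real.exp X := by
          gcongr
          exact (rpow_mul_pow_le_exp_rpow hρ hk (mul_nonneg hτ0.le (hΨ0 ζ))).trans
            (Real.exp_le_exp.2 (hτ _ _ (hΨ0 ζ) (norm_nonneg ζ) (hΨA ζ)))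
      _ ≤ (D + C) * Real.exp X * τ⁻¹ ^ k := by
          rw [mul_right_comm]
          gcongr
          linarith
  calc ‖F ζ‖ ≤ (D + C) * Real.exp X / (1 - τ⁻¹) :=
        norm_le_of_tendsto_sum_of_norm_le_geometric (hF ζ) (by positivity) hq1 hterm
    _ = (D + C) / (1 - τ⁻¹) * Real.exp X := by ring

/-- If `f` is not cobounded, `limsup f l` is the junk value `0` (the `sInf` of a set that is not
bounded below), hence `0 ≤ c`. -/
lemma limsup_le_of_forall_pos_eventually_le {α : Type*} {l : Filter α} {f : α → ℝ} {c : ℝ}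
    (hc : 0 ≤ c) (h : ∀ ε > 0, ∀ᶠ x in l, f x ≤ c + ε) : limsup f l ≤ c := by
  by_cases hcob : l.IsCoboundedUnder (· ≤ ·) f
  · exact le_of_forall_pos_le_add fun ε hε => limsup_le_of_le hcob (h ε hε)
  · rw [limsup_eq]
    exact (Real.sInf_of_not_bddBelow hcob).le.trans hc

lemma eventually_div_le_of_tendsto_atTop {g : ℝ → ℝ} (hg : Tendsto g atTop atTop) (b : ℝ)
    {ε : ℝ} (hε : 0 < ε) : ∀ᶠ r in atTop, b / g r ≤ ε :=
  (hg.const_div_atTop b).eventually (eventually_le_nhds hε)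

lemma log_le_log_of_abs_le {x y : ℝ} (h : |x| ≤ y) (hy : 1 ≤ y) : Real.log x ≤ Real.log y := by
  rcases eq_or_ne x 0 with rfl | hx
  · simpa using Real.log_nonneg hy
  · rw [← Real.log_abs]
    exact Real.log_le_log (abs_pos.mpr hx) h

lemma limsup_log_div_rpow_le {X : ℝ → ℝ} {c ρ : ℝ} (hc : 0 ≤ c) (hρ : 0 < ρ)
    (h : ∀ ε > 0, ∃ C > 0, ∀ᶠ r in atTop, |X r| ≤ C * Real.exp ((c + ε) * r ^ ρ)) :
    limsup (fun r => Real.log (X r) / r ^ ρ) atTop ≤ c := by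
  refine limsup_le_of_forall_pos_eventually_le hc fun ε hε => ?_
  obtain ⟨C, hC, hX⟩ := h (ε / 2) (by positivity)
  filter_upwards [hX, eventually_div_le_of_tendsto_atTop (tendsto_rpow_atTop hρ) (Real.log C)
    (half_pos hε), eventually_gt_atTop 0] with r hXr hCr hr
  have hrρ : 0 < r ^ ρ := by positivity
  rcases eq_or_ne (X r) 0 with h0 | hne
  · rw [h0, Real.log_zero, zero_div]
    positivity
  have hlog : Real.log (X r) ≤ Real.log C + (c + ε / 2) * r ^ ρ := by
    rw [← Real.log_abs, ← Real.log_exp ((c + ε / 2) * r ^ ρ), ← Real.log_mul hC.ne' (by positivity)]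
    exact Real.log_le_log (abs_pos.2 hne) hXr
  rw [div_le_iff₀ hrρ] at hCr ⊢
  linarith

lemma limsup_log_log_div_log_le {X : ℝ → ℝ} {D ρ : ℝ} (hρ : 0 < ρ)
    (h : ∀ᶠ r in atTop, |Real.log (X r)| ≤ D * r ^ ρ) :
    limsup (fun r => Real.log (Real.log (X r)) / Real.log r) atTop ≤ ρ := by
  refine limsup_le_of_forall_pos_eventually_le hρ.le fun ε hε => ?_
  set D' := max D 1
  filter_upwards [h, eventually_div_le_of_tendsto_atTop Real.tendsto_log_atTop (Real.log D') hε,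
    eventually_gt_atTop 1] with r hXr hDr hr
  have hlogr : 0 < Real.log r := Real.log_pos hr
  have hrρ : 1 ≤ r ^ ρ := Real.one_le_rpow hr.le hρ.le
  have hloglog : Real.log (Real.log (X r)) ≤ Real.log D' + ρ * Real.log r := by
    rw [← Real.log_rpow (by positivity), ← Real.log_mul (by positivity) (by positivity)]
    refine log_le_log_of_abs_le (hXr.trans ?_) (one_le_mul_of_one_le_of_one_le (le_max_right _ _) hrρ)
    gcongr
    exact le_max_left _ _
  rw [div_le_iff₀ hlogr] at hDr ⊢
  linarith

section MaxModulus

variable {n : ℕ} {F : Cn n → ℂ}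

lemma maxMod_le {r B : ℝ} (hB : 0 ≤ B) (h : ∀ ζ : Cn n, ‖ζ‖ ≤ r → ‖F ζ‖ ≤ B) :
    maxMod F r ≤ B := by
  refine Real.sSup_le ?_ hB
  rintro x ⟨ζ, hζ, rfl⟩
  exact h ζ (by simpa using hζ)

lemma le_maxMod (hF : Continuous F) {r : ℝ} {ζ : Cn n} (hζ : ‖ζ‖ ≤ r) : ‖F ζ‖ ≤ maxMod F r :=
  le_csSup ((isCompact_closedBall _ _).image (continuous_norm.comp hF)).bddAbove
    ⟨ζ, by simpa using hζ, rfl⟩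

lemma maxMod_le_of_norm_le {C B ρ : ℝ} (hC : 0 ≤ C) (hB : 0 ≤ B) (hρ : 0 ≤ ρ)
    (h : ∀ ζ : Cn n, ‖F ζ‖ ≤ C * Real.exp (B * ‖ζ‖ ^ ρ)) (r : ℝ) :
    maxMod F r ≤ C * Real.exp (B * r ^ ρ) :=
  maxMod_le (by positivity) fun ζ hζ => (h ζ).trans (by gcongr)

/-- `log M_F(r) ≥ log |F(ζ₀)|` once `r ≥ |ζ₀|`, for any `ζ₀` with `F ζ₀ ≠ 0`; if there is none,
`M_F = 0`. -/
lemma exists_abs_log_maxMod_le (hF : Continuous F) {C B ρ : ℝ} (hC : 0 < C) (hB : 0 ≤ B)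
    (hρ : 0 ≤ ρ) (h : ∀ ζ : Cn n, ‖F ζ‖ ≤ C * Real.exp (B * ‖ζ‖ ^ ρ)) :
    ∃ D, ∀ᶠ r in atTop, |Real.log (maxMod F r)| ≤ D * r ^ ρ := by
  by_cases hF0 : ∀ ζ, F ζ = 0
  · refine ⟨0, eventually_ge_atTop 0 |>.mono fun r hr => ?_⟩
    have : maxMod F r = 0 := le_antisymm (maxMod_le le_rfl fun ζ _ => by simp [hF0])
      (by simpa [hF0] using le_maxMod hF (ζ := 0) (by simpa using hr))
    simp [this]
  obtain ⟨ζ₀, hζ₀⟩ := not_forall.1 hF0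
  have hm : 0 < ‖F ζ₀‖ := norm_pos_iff.2 hζ₀
  refine ⟨|Real.log ‖F ζ₀‖| + |Real.log C| + B, ?_⟩
  filter_upwards [eventually_ge_atTop (max ‖ζ₀‖ 1)] with r hr
  have hr1 : 1 ≤ r := (le_max_right _ _).trans hr
  have hrρ : 1 ≤ r ^ ρ := Real.one_le_rpow hr1 hρ
  have hlow : ‖F ζ₀‖ ≤ maxMod F r := le_maxMod hF ((le_max_left _ _).trans hr)
  have hup : Real.log (maxMod F r) ≤ Real.log C + B * r ^ ρ := by
    rw [← Real.log_exp (B * r ^ ρ), ← Real.log_mul hC.ne' (by positivity)]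
    exact Real.log_le_log (hm.trans_le hlow) (maxMod_le_of_norm_le hC.le hB hρ h r)
  have hlow' : Real.log ‖F ζ₀‖ ≤ Real.log (maxMod F r) := Real.log_le_log hm hlow
  rw [abs_le]
  constructor <;> nlinarith [abs_nonneg (Real.log ‖F ζ₀‖), abs_nonneg (Real.log C),
    neg_abs_le (Real.log ‖F ζ₀‖), le_abs_self (Real.log C)]

end MaxModulus

section GrowthConsequences

variable {n : ℕ} {F : Cn n → ℂ} {Ψ : Cn n → ℝ} {ρ A : ℝ}

lemma norm_le_exp_rpow_of_growth (hρ : 0 < ρ) (hA : 0 ≤ A) (hΨ0 : ∀ ζ, 0 ≤ Ψ ζ)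
    (hΨA : ∀ ζ, Ψ ζ ≤ A * ‖ζ‖)
    (hgrowth : ∀ ε > 0, ∃ Cε > 0, ∀ ζ, ‖F ζ‖ ≤ Cε * Real.exp (Ψ ζ ^ ρ + ε * ‖ζ‖ ^ ρ))
    {ε : ℝ} (hε : 0 < ε) :
    ∃ Cε > 0, ∀ ζ, ‖F ζ‖ ≤ Cε * Real.exp ((A ^ ρ + ε) * ‖ζ‖ ^ ρ) := by
  obtain ⟨Cε, hCε, hF⟩ := hgrowth ε hε
  refine ⟨Cε, hCε, fun ζ => (hF ζ).trans ?_⟩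
  gcongr
  calc Ψ ζ ^ ρ + ε * ‖ζ‖ ^ ρ ≤ (A * ‖ζ‖) ^ ρ + ε * ‖ζ‖ ^ ρ := by
        gcongr
        exacts [hΨ0 ζ, hΨA ζ]
    _ = (A ^ ρ + ε) * ‖ζ‖ ^ ρ := by rw [Real.mul_rpow hA (norm_nonneg ζ)]; ring

lemma limsup_log_log_maxMod_div_log_le (hF : Continuous F) (hρ : 0 < ρ) (hA : 0 ≤ A)
    (hΨ0 : ∀ ζ, 0 ≤ Ψ ζ) (hΨA : ∀ ζ, Ψ ζ ≤ A * ‖ζ‖)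
    (hgrowth : ∀ ε > 0, ∃ Cε > 0, ∀ ζ, ‖F ζ‖ ≤ Cε * Real.exp (Ψ ζ ^ ρ + ε * ‖ζ‖ ^ ρ)) :
    limsup (fun r => Real.log (Real.log (maxMod F r)) / Real.log r) atTop ≤ ρ := by
  obtain ⟨C₁, hC₁, hF₁⟩ := norm_le_exp_rpow_of_growth hρ hA hΨ0 hΨA hgrowth one_pos
  obtain ⟨D, hD⟩ := exists_abs_log_maxMod_le hF hC₁ (by positivity) hρ.le hF₁
  exact limsup_log_log_div_log_le hρ hD

lemma limsup_log_maxMod_div_rpow_le (hF : Continuous F) (hρ : 0 < ρ) (hA : 0 ≤ A)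
    (hΨ0 : ∀ ζ, 0 ≤ Ψ ζ) (hΨA : ∀ ζ, Ψ ζ ≤ A * ‖ζ‖)
    (hgrowth : ∀ ε > 0, ∃ Cε > 0, ∀ ζ, ‖F ζ‖ ≤ Cε * Real.exp (Ψ ζ ^ ρ + ε * ‖ζ‖ ^ ρ)) :
    limsup (fun r => Real.log (maxMod F r) / r ^ ρ) atTop ≤ A ^ ρ := by
  refine limsup_log_div_rpow_le (by positivity) hρ fun ε hε => ?_
  obtain ⟨Cε, hCε, hFε⟩ := norm_le_exp_rpow_of_growth hρ hA hΨ0 hΨA hgrowth hε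
  refine ⟨Cε, hCε, eventually_ge_atTop 0 |>.mono fun r hr => ?_⟩
  rw [abs_of_nonneg ((norm_nonneg _).trans (le_maxMod hF (ζ := 0) (by simpa using hr)))]
  exact maxMod_le_of_norm_le hCε.le (by positivity) hρ.le hFε r

lemma limsup_log_norm_smul_div_rpow_le {V : Type*} [NormedAddCommGroup V] [NormedSpace ℂ V]
    {F : V → ℂ} {Ψ : V → ℝ} (hρ : 0 < ρ) (ζ : V) (hΨ0 : 0 ≤ Ψ ζ)
    (hΨsmul : ∀ t : ℝ, 0 ≤ t → Ψ ((t : ℂ) • ζ) = t * Ψ ζ)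
    (hgrowth : ∀ ε > 0, ∃ Cε > 0, ∀ ζ, ‖F ζ‖ ≤ Cε * Real.exp (Ψ ζ ^ ρ + ε * ‖ζ‖ ^ ρ)) :
    limsup (fun t : ℝ => Real.log ‖F ((t : ℂ) • ζ)‖ / t ^ ρ) atTop ≤ Ψ ζ ^ ρ := by
  refine limsup_log_div_rpow_le (by positivity) hρ fun ε hε => ?_
  have hζρ : 0 ≤ ‖ζ‖ ^ ρ := by positivity
  obtain ⟨Cε, hCε, hFε⟩ := hgrowth (ε / (‖ζ‖ ^ ρ + 1)) (by positivity)
  refine ⟨Cε, hCε, eventually_ge_atTop 0 |>.mono fun t ht => ?_⟩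
  rw [abs_norm]
  refine (hFε _).trans ?_
  have hεζ : ε / (‖ζ‖ ^ ρ + 1) * ‖ζ‖ ^ ρ ≤ ε := by
    rw [div_mul_eq_mul_div, div_le_iff₀ (by positivity)]
    nlinarith
  rw [hΨsmul t ht, norm_smul, Complex.norm_real, Real.norm_of_nonneg ht,
    Real.mul_rpow ht hΨ0, Real.mul_rpow ht (norm_nonneg ζ)]
  gcongr
  nlinarith [Real.rpow_nonneg ht ρ]

end GrowthConsequences

section Extension

variable {n : ℕ} {E : Set (Cn n)}

lemma toReal_siciak_le {γ : Cn n → ℝ} {L : ℝ≥0∞} {ζ : Cn n} (hL : L ≠ ⊤)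
    (h : siciak E γ ζ ≤ ENNReal.ofReal ‖ζ‖ * L) : (siciak E γ ζ).toReal ≤ L.toReal * ‖ζ‖ := by
  simpa [ENNReal.toReal_mul, mul_comm] using ENNReal.toReal_mono (by finiteness) h

lemma norm_evalP_le_of_iteratedDeriv_div_factorial_eq {C ρ : ℝ} (hC : 0 < C) (hρ : 0 < ρ)
    {σ : Cn n → ℝ} (hσ0 : ∀ ζ ∈ E, 0 ≤ σ ζ) {φ : Cn n → ℂ → ℂ}
    (hφ : ∀ ζ ∈ E, Differentiable ℂ (φ ζ))
    (hbd : ∀ ζ ∈ E, ∀ z : ℂ, ‖φ ζ z‖ ≤ C * Real.exp (σ ζ * ‖z‖ ^ ρ))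
    {p : MvPolynomial (Fin n) ℂ} {k : ℕ} (hp : p.IsHomogeneous k) (hk : k ≠ 0)
    (hpφ : ∀ ζ ∈ E, iteratedDeriv k (φ ζ) 0 / (k.factorial : ℂ) = evalP p ζ) {ζ : Cn n}
    (hfin : siciak E (fun ξ => σ ξ ^ (1 / ρ)) ζ ≠ ⊤) :
    ‖evalP p ζ‖ ≤ C * (Real.exp 1 * ρ / k) ^ ((k : ℝ) / ρ) *
      (siciak E (fun ξ => σ ξ ^ (1 / ρ)) ζ).toReal ^ k := by
  refine norm_evalP_le_mul_siciak_pow hp (Nat.one_le_iff_ne_zero.2 hk) (by positivity)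
    (fun ξ hξ => Real.rpow_nonneg (hσ0 ξ hξ) _) (fun ξ hξ => ?_) hfin
  rw [← hpφ ξ hξ, norm_div, Complex.norm_natCast]
  exact norm_iteratedDeriv_div_factorial_le (hφ ξ hξ) (hσ0 ξ hξ) hρ (hbd ξ hξ) hk

variable {γ : Cn n → ℝ} {F : Cn n → ℂ} {ρ : ℝ}

lemma ofReal_limsup_log_maxMod_div_rpow_le (hF : Continuous F) (hρ : 0 < ρ)
    (hgrowth : ∀ ε > 0, ∃ Cε > 0, ∀ ζ,
      ‖F ζ‖ ≤ Cε * Real.exp ((siciak E γ ζ).toReal ^ ρ + ε * ‖ζ‖ ^ ρ)) :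
    ENNReal.ofReal (limsup (fun r => Real.log (maxMod F r) / r ^ ρ) atTop) ≤
      (⨆ ζ ∈ Metric.sphere (0 : Cn n) 1, siciakStar E γ ζ) ^ ρ := by
  set α := ⨆ ζ ∈ Metric.sphere (0 : Cn n) 1, siciakStar E γ ζ
  rcases eq_or_ne α ⊤ with hα | hα
  · rw [hα, ENNReal.top_rpow_of_pos hρ]
    exact le_top
  have hΨα : ∀ ζ, (siciak E γ ζ).toReal ≤ α.toReal * ‖ζ‖ := fun ζ =>
    toReal_siciak_le hα <| siciak_le_ofReal_norm_mul (fun u hu =>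
      (siciak_le_siciakStar E γ u).trans (le_biSup _ (by simpa using hu))) ζ
  refine ENNReal.ofReal_le_of_le_toReal ?_
  rw [← ENNReal.toReal_rpow]
  exact limsup_log_maxMod_div_rpow_le hF hρ ENNReal.toReal_nonneg
    (fun _ => ENNReal.toReal_nonneg) hΨα hgrowth

lemma ofReal_limsup_log_norm_smul_div_rpow_le (hρ : 0 < ρ)
    (hgrowth : ∀ ε > 0, ∃ Cε > 0, ∀ ζ,
      ‖F ζ‖ ≤ Cε * Real.exp ((siciak E γ ζ).toReal ^ ρ + ε * ‖ζ‖ ^ ρ)) (ζ : Cn n) :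
    ENNReal.ofReal (limsup (fun t : ℝ => Real.log ‖F ((t : ℂ) • ζ)‖ / t ^ ρ) atTop) ≤
      siciak E γ ζ ^ ρ := by
  refine ENNReal.ofReal_le_of_le_toReal ?_
  rw [← ENNReal.toReal_rpow]
  refine limsup_log_norm_smul_div_rpow_le hρ ζ ENNReal.toReal_nonneg (fun t ht => ?_) hgrowth
  rw [siciak_smul, ENNReal.toReal_mul, Complex.norm_real, Real.norm_of_nonneg ht,
    ENNReal.toReal_ofReal ht]

end Extension

theorem growth_of_extension_general {n : ℕ} (E : Set (Cn n))
    (hcap : PosHomCapacity E)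
    (C ρ : ℝ) (hC : 0 < C) (hρ : 0 < ρ)
    (σ : Cn n → ℝ) (hσ0 : ∀ ζ ∈ E, 0 ≤ σ ζ) (hσb : ∃ M : ℝ, ∀ ζ ∈ E, σ ζ ≤ M)
    (φ : Cn n → ℂ → ℂ) (hφ : ∀ ζ ∈ E, Differentiable ℂ (φ ζ))
    (hbd : ∀ ζ ∈ E, ∀ z : ℂ,
      ‖φ ζ z‖ ≤ C * Real.exp (σ ζ * ‖z‖ ^ ρ))
    (P : ℕ → MvPolynomial (Fin n) ℂ) (hP : ∀ k : ℕ, (P k).IsHomogeneous k)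
    (hPφ : ∀ k : ℕ, ∀ ζ ∈ E,
      iteratedDeriv k (φ ζ) 0 / (Nat.factorial k : ℂ) = evalP (P k) ζ)
    (F : Cn n → ℂ)
    (hF : TendstoLocallyUniformly
      (fun (N : ℕ) (ζ : Cn n) => ∑ k ∈ Finset.range N, evalP (P k) ζ) F Filter.atTop) :
    -- |F(ζ)| ≤ C_ε exp(Ψ_{E,γ}(ζ)^ρ + ε|ζ|^ρ) with γ = σ^{1/ρ}
    (∀ ε : ℝ, 0 < ε → ∃ Cε : ℝ, 0 < Cε ∧ ∀ ζ : Cn n,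
      ‖F ζ‖ ≤
        Cε * Real.exp ((siciak E (fun ξ => σ ξ ^ (1 / ρ)) ζ).toReal ^ ρ + ε * ‖ζ‖ ^ ρ)) ∧
    -- order of F at most ρ
    (Filter.limsup (fun r : ℝ => Real.log (Real.log (maxMod F r)) / Real.log r)
      Filter.atTop ≤ ρ) ∧
    -- type with respect to ρ at most α^ρ, α = sup_{|ζ|=1} Ψ_{E,γ}^*(ζ)
    (ENNReal.ofReal (Filter.limsup (fun r : ℝ => Real.log (maxMod F r) / r ^ ρ) Filter.atTop) ≤
      (⨆ ζ ∈ Metric.sphere (0 : Cn n) 1, siciakStar E (fun ξ => σ ξ ^ (1 / ρ)) ζ) ^ ρ) ∧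
    -- indicator function bound i_F ≤ Ψ_{E,γ}^ρ
    (∀ ζ : Cn n,
      ENNReal.ofReal (Filter.limsup
          (fun t : ℝ => Real.log (‖F ((t : ℂ) • ζ)‖) / t ^ ρ) Filter.atTop) ≤
        siciak E (fun ξ => σ ξ ^ (1 / ρ)) ζ ^ ρ) := by
  set γ : Cn n → ℝ := fun ξ => σ ξ ^ (1 / ρ)
  obtain ⟨M, hM⟩ := hσb
  obtain ⟨L, hL, hΨL⟩ := hcap.exists_siciak_le (γ := γ) (G := M ^ (1 / ρ)) fun ξ hξ =>
    Real.rpow_le_rpow (hσ0 ξ hξ) (hM ξ hξ) (by positivity)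
  have hfin : ∀ ζ, siciak E γ ζ ≠ ⊤ := fun ζ => ne_top_of_le_ne_top (by finiteness) (hΨL ζ)
  have hΨ0 : ∀ ζ, 0 ≤ (siciak E γ ζ).toReal := fun _ => ENNReal.toReal_nonneg
  have hΨA : ∀ ζ, (siciak E γ ζ).toReal ≤ L.toReal * ‖ζ‖ := fun ζ => toReal_siciak_le hL (hΨL ζ)
  have hFc : Continuous F := hF.continuous (Eventually.of_forall fun N =>
    continuous_finsetSum _ fun k _ => continuous_evalP (P k)).frequently
  have hP0 : ∀ ζ, ‖evalP (P 0) ζ‖ ≤ ‖evalP (P 0) 0‖ := fun ζ =>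
    le_of_eq (by simpa using congrArg norm (evalP_smul_of_isHomogeneous (hP 0) 0 ζ).symm)
  have hgrowth : ∀ ε > 0, ∃ Cε > 0, ∀ ζ,
      ‖F ζ‖ ≤ Cε * Real.exp ((siciak E γ ζ).toReal ^ ρ + ε * ‖ζ‖ ^ ρ) := fun ε hε =>
    norm_le_exp_of_norm_term_le hC hρ ENNReal.toReal_nonneg hΨ0 hΨA hP0
      (fun k hk ζ => norm_evalP_le_of_iteratedDeriv_div_factorial_eq hC hρ hσ0 hφ hbd (hP k) hk
        (hPφ k) (hfin ζ))
      (fun ζ => (tendstoLocallyUniformlyOn_univ.2 hF).tendsto_at (Set.mem_univ ζ)) hε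
  exact ⟨hgrowth, limsup_log_log_maxMod_div_log_le hFc hρ ENNReal.toReal_nonneg hΨ0 hΨA hgrowth,
    ofReal_limsup_log_maxMod_div_rpow_le hFc hρ hgrowth,
    ofReal_limsup_log_norm_smul_div_rpow_le hρ hgrowth⟩

/-- Theorem 4.1, growth estimates (4.4): order, type, and indicator bounds for the extension. -/
theorem growth_of_extension {n : ℕ} (E : Set (Cn n)) (hEcpt : IsCompact E)
    (hcap : PosHomCapacity E)
    (C ρ : ℝ) (hC : 0 < C) (hρ : 0 < ρ)
    (σ : Cn n → ℝ) (hσ0 : ∀ ζ ∈ E, 0 ≤ σ ζ) (hσb : ∃ M : ℝ, ∀ ζ ∈ E, σ ζ ≤ M)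
    (φ : Cn n → ℂ → ℂ) (hφ : ∀ ζ ∈ E, Differentiable ℂ (φ ζ))
    (hbd : ∀ ζ ∈ E, ∀ z : ℂ,
      ‖φ ζ z‖ ≤ C * Real.exp (σ ζ * ‖z‖ ^ ρ))
    (P : ℕ → MvPolynomial (Fin n) ℂ) (hP : ∀ k : ℕ, (P k).IsHomogeneous k)
    (hPφ : ∀ k : ℕ, ∀ ζ ∈ E,
      iteratedDeriv k (φ ζ) 0 / (Nat.factorial k : ℂ) = evalP (P k) ζ)
    (F : Cn n → ℂ)
    (hF : TendstoLocallyUniformly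
      (fun (N : ℕ) (ζ : Cn n) => ∑ k ∈ Finset.range N, evalP (P k) ζ) F Filter.atTop) :
    -- |F(ζ)| ≤ C_ε exp(Ψ_{E,γ}(ζ)^ρ + ε|ζ|^ρ) with γ = σ^{1/ρ}
    (∀ ε : ℝ, 0 < ε → ∃ Cε : ℝ, 0 < Cε ∧ ∀ ζ : Cn n,
      ‖F ζ‖ ≤
        Cε * Real.exp ((siciak E (fun ξ => σ ξ ^ (1 / ρ)) ζ).toReal ^ ρ + ε * ‖ζ‖ ^ ρ)) ∧
    -- order of F at most ρ
    (Filter.limsup (fun r : ℝ => Real.log (Real.log (maxMod F r)) / Real.log r)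
      Filter.atTop ≤ ρ) ∧
    -- type with respect to ρ at most α^ρ, α = sup_{|ζ|=1} Ψ_{E,γ}^*(ζ)
    (ENNReal.ofReal (Filter.limsup (fun r : ℝ => Real.log (maxMod F r) / r ^ ρ) Filter.atTop) ≤
      (⨆ ζ ∈ Metric.sphere (0 : Cn n) 1, siciakStar E (fun ξ => σ ξ ^ (1 / ρ)) ζ) ^ ρ) ∧
    -- indicator function bound i_F ≤ Ψ_{E,γ}^ρ
    (∀ ζ : Cn n,
      ENNReal.ofReal (Filter.limsup
          (fun t : ℝ => Real.log (‖F ((t : ℂ) • ζ)‖) / t ^ ρ) Filter.atTop) ≤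
        siciak E (fun ξ => σ ξ ^ (1 / ρ)) ζ ^ ρ) :=
  growth_of_extension_general E hcap C ρ hC hρ σ hσ0 hσb φ hφ hbd P hP hPφ F hF

end
end

section
/- Let f be an entire function on ℂ^n and suppose there are constants A, B > 0, C > 0 and N ≥ 0 such that |f(ζ)| ≤ B·e^{A|ζ|} for all ζ ∈ ℂ^n and |f(ξ)| ≤ C·(1+|ξ|)^N for all ξ ∈ ℝ^n. Then |f(ζ)| ≤ 2^N·C·(1+|ζ|)^N·e^{A|Im ζ|} for all ζ ∈ ℂ^n, where Im ζ = (Im ζ_1, …, Im ζ_n) ∈ ℝ^n. -/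
/-!
Fix `ζ = ξ + iη` and restrict `f` to the complex line `z ↦ ξ + zη`, rotated by `z = iw`: this
gives an entire function `g` of one variable with `g 1 = f ζ`, of exponential type `A‖η‖`, whose
values on the imaginary axis are values of `f` on `ℝⁿ`. Since
`1 + ‖ξ - tη‖ ≤ (1 + ‖ζ‖) ‖1 + it‖`, the function `g(w) e^{-A‖η‖w} / (1 + w)^N` is bounded by
`C (1 + ‖ζ‖)^N` on the imaginary axis and bounded on the positive real axis, so by
Phragmén–Lindelöf it is bounded by the same constant at `w = 1`, where `‖1 + w‖^N = 2^N`.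
-/

open scoped ENNReal RealInnerProductSpace BigOperators
open Filter MeasureTheory

noncomputable section

/-- The imaginary part `Im ζ = (Im ζ_1, …, Im ζ_n) ∈ ℝⁿ` of a point of ℂⁿ. -/
def imPart {n : ℕ} (ζ : Cn n) : Rn n := WithLp.toLp 2 (fun i => (ζ i).im)

lemma one_add_add_abs_mul_le (x y s : ℝ) :
    1 + x + |s| * y ≤ (1 + √(x ^ 2 + y ^ 2)) * √(1 + s ^ 2) := by
  set r := √(x ^ 2 + y ^ 2)
  have hr : r ^ 2 = x ^ 2 + y ^ 2 := Real.sq_sqrt (by positivity)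
  have hxr : x ≤ r := (le_abs_self x).trans (Real.abs_le_sqrt (by nlinarith))
  have hsq : (1 + x + |s| * y) ^ 2 ≤ (1 + r) ^ 2 * (1 + s ^ 2) := by
    nlinarith [sq_nonneg (y - (1 + x) * |s|), sq_abs s, sq_nonneg s]
  calc 1 + x + |s| * y ≤ √((1 + r) ^ 2 * (1 + s ^ 2)) :=
        (le_abs_self _).trans (Real.abs_le_sqrt hsq)
    _ = (1 + r) * √(1 + s ^ 2) := by
        rw [Real.sqrt_mul' _ (by positivity), Real.sqrt_sq (by positivity)]

lemma one_add_norm_add_smul_le {E : Type*} [SeminormedAddCommGroup E] [NormedSpace ℝ E]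
    (x y : E) (s : ℝ) : 1 + ‖x + s • y‖ ≤ (1 + √(‖x‖ ^ 2 + ‖y‖ ^ 2)) * √(1 + s ^ 2) :=
  calc 1 + ‖x + s • y‖ ≤ 1 + ‖x‖ + |s| * ‖y‖ := by
        rw [add_assoc, ← Real.norm_eq_abs, ← norm_smul]
        exact add_le_add_right (norm_add_le x (s • y)) 1
    _ ≤ _ := one_add_add_abs_mul_le _ _ s

def rePart {n : ℕ} (ζ : Cn n) : Rn n := WithLp.toLp 2 (fun i => (ζ i).re)

lemma norm_eq_sqrt_rePart_imPart {n : ℕ} (ζ : Cn n) :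
    ‖ζ‖ = √(‖rePart ζ‖ ^ 2 + ‖imPart ζ‖ ^ 2) := by
  rw [← Real.sqrt_sq (norm_nonneg ζ)]
  congr 1
  simp only [EuclideanSpace.norm_sq_eq, ← Finset.sum_add_distrib]
  refine Finset.sum_congr rfl fun i _ => ?_
  simp [rePart, imPart, Complex.sq_norm, Complex.normSq_apply]
  ring

lemma norm_toCn {n : ℕ} (x : Rn n) : ‖toCn x‖ = ‖x‖ := by
  simp [EuclideanSpace.norm_eq, toCn]

lemma toCn_add_I_mul_smul {n : ℕ} (x y : Rn n) (t : ℝ) :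
    toCn x + (Complex.I * (t * Complex.I)) • toCn y = toCn (x - t • y) := by
  ext i
  simp only [toCn, PiLp.add_apply, PiLp.smul_apply, PiLp.sub_apply, PiLp.toLp_apply, smul_eq_mul,
    mul_left_comm Complex.I, Complex.I_mul_I]
  push_cast
  ring

lemma toCn_rePart_add_I_smul {n : ℕ} (ζ : Cn n) :
    toCn (rePart ζ) + Complex.I • toCn (imPart ζ) = ζ := by
  ext i
  simpa [toCn, rePart, imPart, mul_comm] using Complex.re_add_im (ζ i)

lemma norm_toCn_add_smul_le {n : ℕ} (x y : Rn n) (z : ℂ) :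
    ‖toCn x + z • toCn y‖ ≤ ‖x‖ + ‖z‖ * ‖y‖ :=
  (norm_add_le _ _).trans_eq (by rw [norm_smul, norm_toCn, norm_toCn])

lemma one_add_norm_rePart_sub_smul_imPart_le {n : ℕ} (ζ : Cn n) (t : ℝ) :
    1 + ‖rePart ζ - t • imPart ζ‖ ≤ (1 + ‖ζ‖) * ‖1 + t * Complex.I‖ := by
  have hnorm : ‖1 + t * Complex.I‖ = √(1 + (-t) ^ 2) := by
    simpa using Complex.norm_add_mul_I 1 t
  rw [sub_eq_add_neg, ← neg_smul, hnorm, norm_eq_sqrt_rePart_imPart]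
  exact one_add_norm_add_smul_le _ _ _

namespace Complex

lemma one_le_norm_one_add {w : ℂ} (hw : 0 ≤ w.re) : 1 ≤ ‖1 + w‖ :=
  calc (1 : ℝ) ≤ (1 + w).re := by simpa using hw
    _ ≤ ‖1 + w‖ := re_le_norm _

lemma mul_norm_sub_mul_re_le (a : ℝ) (w : ℂ) : a * ‖w‖ - a * w.re ≤ 2 * |a| * ‖w‖ := by
  have h₁ : 0 ≤ (|a| - a) * (‖w‖ - w.re) :=
    mul_nonneg (sub_nonneg.2 (le_abs_self a)) (sub_nonneg.2 (re_le_norm w))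
  have h₂ : 0 ≤ |a| * (‖w‖ + w.re) :=
    mul_nonneg (abs_nonneg a) (by linarith [neg_abs_le w.re, abs_re_le_norm w])
  linarith

lemma differentiableOn_mul_exp_div_one_add_cpow {g : ℂ → ℂ} (hg : Differentiable ℂ g)
    (a N : ℝ) :
    DifferentiableOn ℂ (fun w => g w * exp (-a * w) / (1 + w) ^ (N : ℂ)) {w | 0 ≤ w.re} := by
  intro w (hw : 0 ≤ w.re)
  have hslit : 1 + w ∈ slitPlane := mem_slitPlane_iff.2 (Or.inl (by simp; linarith))
  refine (((hg w).mul (by fun_prop)).div (.cpow (by fun_prop) (by fun_prop) hslit) ?_)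
    |>.differentiableWithinAt
  exact fun h => slitPlane_ne_zero hslit ((cpow_eq_zero_iff _ _).1 h).1

theorem norm_le_of_exp_bound_of_polynomial_bound_on_imaginary_axis {g : ℂ → ℂ}
    (hg : Differentiable ℂ g) {K M a N : ℝ} (hN : 0 ≤ N)
    (hexp : ∀ w : ℂ, 0 ≤ w.re → ‖g w‖ ≤ K * Real.exp (a * ‖w‖))
    (him : ∀ t : ℝ, ‖g (t * I)‖ ≤ M * ‖1 + t * I‖ ^ N) {w : ℂ} (hw : 0 ≤ w.re) :
    ‖g w‖ ≤ M * ‖1 + w‖ ^ N * Real.exp (a * w.re) := by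
  set F : ℂ → ℂ := fun w => g w * exp (-a * w) / (1 + w) ^ (N : ℂ) with hF
  have hK : 0 ≤ K := (norm_nonneg _).trans (by simpa using hexp 0 le_rfl)
  have hpow_pos : ∀ w : ℂ, 0 ≤ w.re → 0 < ‖1 + w‖ ^ N := fun w hw =>
    Real.rpow_pos_of_pos (one_pos.trans_le (one_le_norm_one_add hw)) N
  have norm_F : ∀ w, ‖F w‖ = ‖g w‖ * Real.exp (-(a * w.re)) / ‖1 + w‖ ^ N := fun w => by
    simp [hF, norm_exp, norm_cpow_real]
  have norm_F_le : ∀ w : ℂ, 0 ≤ w.re → ‖F w‖ ≤ ‖g w‖ * Real.exp (-(a * w.re)) := fun w hw => by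
    rw [norm_F]
    exact div_le_self (by positivity) (Real.one_le_rpow (one_le_norm_one_add hw) hN)
  have hF_diff : DiffContOnCl ℂ F {z : ℂ | 0 < z.re} := by
    refine DifferentiableOn.diffContOnCl ?_
    rw [closure_setOfPred_lt_re]
    exact differentiableOn_mul_exp_div_one_add_cpow hg a N
  have hF_growth : ∀ w : ℂ, 0 ≤ w.re → ‖F w‖ ≤ K * Real.exp (2 * |a| * ‖w‖) := fun w hw =>
    calc ‖F w‖ ≤ K * Real.exp (a * ‖w‖) * Real.exp (-(a * w.re)) :=
          (norm_F_le w hw).trans (by gcongr; exact hexp w hw)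
      _ ≤ K * Real.exp (2 * |a| * ‖w‖) := by
          rw [mul_assoc, ← Real.exp_add, ← sub_eq_add_neg]
          gcongr
          exact mul_norm_sub_mul_re_le a w
  have hF_real : ∀ x : ℝ, 0 ≤ x → ‖F x‖ ≤ K := fun x hx => by
    have hx' : 0 ≤ (x : ℂ).re := by simpa using hx
    calc ‖F x‖ ≤ K * Real.exp (a * ‖(x : ℂ)‖) * Real.exp (-(a * (x : ℂ).re)) :=
          (norm_F_le x hx').trans (by gcongr; exact hexp x hx')
      _ = K := by
          rw [norm_real, Real.norm_of_nonneg hx, ofReal_re, mul_assoc, ← Real.exp_add]; simp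
  have hF_imag : ∀ t : ℝ, ‖F (t * I)‖ ≤ M := fun t => by
    have hre : (t * I).re = 0 := by simp
    rw [norm_F, hre, mul_zero, neg_zero, Real.exp_zero, mul_one,
      div_le_iff₀ (hpow_pos _ hre.ge)]
    exact him t
  have hF_bound := PhragmenLindelof.right_half_plane_of_bounded_on_real hF_diff
    ⟨1, one_lt_two, 2 * |a|, .of_bound K <| eventually_inf_principal.2 <| .of_forall
      fun w hw => by simpa [abs_of_nonneg hK] using hF_growth w (le_of_lt hw)⟩
    (isBoundedUnder_of_eventually_le (eventually_ge_atTop 0 |>.mono hF_real)) hF_imag hw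
  rw [norm_F, div_le_iff₀ (hpow_pos w hw)] at hF_bound
  calc ‖g w‖ = ‖g w‖ * Real.exp (-(a * w.re)) * Real.exp (a * w.re) := by
        rw [mul_assoc, ← Real.exp_add, neg_add_cancel, Real.exp_zero, mul_one]
    _ ≤ M * ‖1 + w‖ ^ N * Real.exp (a * w.re) := by gcongr

end Complex

/-- The Phragmén–Lindelöf estimate from the proof of Theorem 5.5 (iii): an entire function of
exponential type with polynomial growth on ℝⁿ grows exponentially only in imaginary
directions. -/
theorem phragmen_lindelof_estimate {n : ℕ} (f : Cn n → ℂ) (hf : Differentiable ℂ f)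
    (A B C N : ℝ) (hA : 0 < A) (hB : 0 < B) (hC : 0 < C) (hN : 0 ≤ N)
    (hexp : ∀ ζ : Cn n, ‖f ζ‖ ≤ B * Real.exp (A * ‖ζ‖))
    (hreal : ∀ ξ : Rn n, ‖f (toCn ξ)‖ ≤ C * (1 + ‖ξ‖) ^ N) :
    ∀ ζ : Cn n,
      ‖f ζ‖ ≤ 2 ^ N * C * (1 + ‖ζ‖) ^ N * Real.exp (A * ‖imPart ζ‖) := by
  intro ζ
  set ξ := rePart ζ
  set η := imPart ζ
  set g : ℂ → ℂ := fun w => f (toCn ξ + (Complex.I * w) • toCn η) with hg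
  have hg_exp : ∀ w : ℂ, 0 ≤ w.re →
      ‖g w‖ ≤ B * Real.exp (A * ‖ξ‖) * Real.exp (A * ‖η‖ * ‖w‖) := fun w _ =>
    calc ‖g w‖ ≤ B * Real.exp (A * ‖toCn ξ + (Complex.I * w) • toCn η‖) := hexp _
      _ ≤ B * Real.exp (A * (‖ξ‖ + ‖w‖ * ‖η‖)) := by
          gcongr; simpa using norm_toCn_add_smul_le ξ η (Complex.I * w)
      _ = _ := by rw [mul_assoc, ← Real.exp_add]; ring_nf
  have hg_im : ∀ t : ℝ,
      ‖g (t * Complex.I)‖ ≤ C * (1 + ‖ζ‖) ^ N * ‖1 + t * Complex.I‖ ^ N := fun t =>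
    calc ‖g (t * Complex.I)‖ ≤ C * (1 + ‖ξ - t • η‖) ^ N := by
          simpa only [hg, toCn_add_I_mul_smul] using hreal _
      _ ≤ C * ((1 + ‖ζ‖) * ‖1 + t * Complex.I‖) ^ N := by
          gcongr; exact one_add_norm_rePart_sub_smul_imPart_le ζ t
      _ = _ := by rw [Real.mul_rpow (by positivity) (norm_nonneg _), mul_assoc]
  calc ‖f ζ‖ = ‖g 1‖ := by simp [hg, ξ, η, toCn_rePart_add_I_smul]
    _ ≤ C * (1 + ‖ζ‖) ^ N * ‖1 + 1‖ ^ N * Real.exp (A * ‖η‖ * (1 : ℂ).re) :=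
        Complex.norm_le_of_exp_bound_of_polynomial_bound_on_imaginary_axis (hf.comp (by fun_prop))
          hN hg_exp hg_im (by simp)
    _ = _ := by norm_num; ring

end
end

section
/- Let u be a continuous rapidly decreasing function on ℝ^n. Then for every ω ∈ S^{n-1} and every s ∈ ℝ, the one-dimensional Fourier transform of the Radon transform satisfies ∫_ℝ e^{-isp}·Ru(ω,p) dp = ∫_{ℝ^n} e^{-is⟨x,ω⟩}·u(x) dx = û(sω); in particular both integrals converge absolutely. -/
/-!
Writing `x = p • ω + y` with `y ⊥ ω` is an isometric, hence volume-preserving, change of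
coordinates `ℝ × ω^⊥ ≃ ℝⁿ` in which `⟪x, ω⟫ = p`. Fubini in these coordinates splits
`∫ e^{-is⟪x,ω⟫} u(x) dx` into `∫ e^{-isp} (∫_{ω^⊥} u(pω + y) dy) dp`; rapid decay of `u`
makes it integrable, which justifies Fubini and gives both integrability claims.
-/

open scoped ENNReal RealInnerProductSpace BigOperators
open Filter MeasureTheory

noncomputable section

/-- A continuous rapidly decreasing function: `|x|^k u(x)` is bounded for every `k`. -/
def RapidlyDecreasing {n : ℕ} (u : Rn n → ℂ) : Prop :=
  Continuous u ∧ ∀ k : ℕ, ∃ M : ℝ, ∀ x : Rn n, ‖x‖ ^ k * ‖u x‖ ≤ M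

/-- The Radon transform: the integral of `u` over the hyperplane `⟨x,ω⟩ = p`,
written as `∫_{y ∈ ω^⊥} u(pω + y) dy`. -/
def radon {n : ℕ} (u : Rn n → ℂ) (ω : Rn n) (p : ℝ) : ℂ :=
  ∫ y : ((ℝ ∙ ω)ᗮ : Submodule ℝ (Rn n)), u (p • ω + (y : Rn n))

section UnitVectorCoords

variable {E : Type*} [NormedAddCommGroup E] [InnerProductSpace ℝ E] {ω : E}

theorem inner_smul_add_orthogonal_of_norm_eq_one (hω : ‖ω‖ = 1) (p : ℝ) (y : (ℝ ∙ ω)ᗮ) :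
    ⟪p • ω + y, ω⟫ = p := by
  rw [inner_add_left, real_inner_smul_left, real_inner_self_eq_norm_sq, hω,
    (Submodule.mem_orthogonal_singleton_iff_inner_left).1 y.2]
  ring

variable [FiniteDimensional ℝ E] [MeasurableSpace E] [BorelSpace E]

def unitVectorCoords (ω : E) (hω : ‖ω‖ = 1) : ℝ × (ℝ ∙ ω)ᗮ ≃ᵐ E :=
  ((LinearIsometryEquiv.toSpanUnitSingleton ω hω).toMeasurableEquiv.prodCongr
    (MeasurableEquiv.refl _)).trans <|
    (MeasurableEquiv.toLp 2 _).trans (ℝ ∙ ω).orthogonalDecomposition.symm.toMeasurableEquiv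

variable (hω : ‖ω‖ = 1)
include hω

@[simp]
theorem unitVectorCoords_apply (z : ℝ × (ℝ ∙ ω)ᗮ) :
    unitVectorCoords ω hω z = z.1 • ω + z.2 :=
  rfl

theorem measurePreserving_unitVectorCoords :
    MeasurePreserving (unitVectorCoords ω hω) (volume.prod volume) volume :=
  (ℝ ∙ ω).orthogonalDecomposition.symm.measurePreserving.comp <|
    (WithLp.volume_preserving_toLp (ℝ ∙ ω) (ℝ ∙ ω)ᗮ).comp <|
      (LinearIsometryEquiv.toSpanUnitSingleton ω hω).measurePreserving.prod
        (MeasurePreserving.id volume)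

variable {F : Type*} [NormedAddCommGroup F] {f : E → F}

theorem MeasureTheory.Integrable.comp_unitVectorCoords (hf : Integrable f) :
    Integrable (fun z : ℝ × (ℝ ∙ ω)ᗮ => f (z.1 • ω + z.2)) (volume.prod volume) :=
  ((measurePreserving_unitVectorCoords hω).integrable_comp_emb
    (MeasurableEquiv.measurableEmbedding _)).2 hf

variable [NormedSpace ℝ F]

theorem MeasureTheory.Integrable.integral_orthogonal_slice (hf : Integrable f) :
    Integrable fun p : ℝ => ∫ y : (ℝ ∙ ω)ᗮ, f (p • ω + y) :=
  (hf.comp_unitVectorCoords hω).integral_prod_left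

theorem integral_eq_integral_integral_orthogonal_slice [CompleteSpace F] (hf : Integrable f) :
    ∫ x, f x = ∫ p : ℝ, ∫ y : (ℝ ∙ ω)ᗮ, f (p • ω + y) := by
  rw [← (measurePreserving_unitVectorCoords hω).integral_comp' f]
  simp only [unitVectorCoords_apply]
  exact integral_prod _ (hf.comp_unitVectorCoords hω)

end UnitVectorCoords

theorem RapidlyDecreasing.integrable {n : ℕ} {u : Rn n → ℂ} (hu : RapidlyDecreasing u)
    {μ : Measure (Rn n)} [μ.HasTemperateGrowth] : Integrable u μ := by
  obtain ⟨C₁, hC₁⟩ := hu.2 0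
  obtain ⟨C₂, hC₂⟩ := hu.2 μ.integrablePower
  have hnorm : Integrable (fun x => ‖x‖ ^ 0 * ‖u x‖) μ :=
    integrable_of_le_of_pow_mul_le (fun x => by simpa using hC₁ x) (by simpa using hC₂)
      hu.1.aestronglyMeasurable
  simp only [pow_zero, one_mul] at hnorm
  exact (integrable_norm_iff hu.1.aestronglyMeasurable).1 hnorm

/-- Formula (6.1): the one-dimensional Fourier transform of the Radon transform equals the
Fourier transform of `u` at `sω`; both integrals converge absolutely. -/
theorem fourier_of_radon {n : ℕ} (u : Rn n → ℂ) (hu : RapidlyDecreasing u)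
    (ω : Rn n) (hω : ‖ω‖ = 1) (s : ℝ) :
    MeasureTheory.Integrable
      (fun p : ℝ => Complex.exp (-(Complex.I * ((s * p : ℝ) : ℂ))) * radon u ω p) ∧
    MeasureTheory.Integrable
      (fun x : Rn n => Complex.exp (-(Complex.I * ((s * ⟪x, ω⟫ : ℝ) : ℂ))) * u x) ∧
    (∫ p : ℝ, Complex.exp (-(Complex.I * ((s * p : ℝ) : ℂ))) * radon u ω p) =
      ∫ x : Rn n, Complex.exp (-(Complex.I * ((s * ⟪x, ω⟫ : ℝ) : ℂ))) * u x := by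
  have hf : Integrable fun x : Rn n =>
      Complex.exp (-(Complex.I * ((s * ⟪x, ω⟫ : ℝ) : ℂ))) * u x :=
    hu.integrable.bdd_mul (c := 1) (by fun_prop)
      (ae_of_all _ fun x => by simp [Complex.norm_exp])
  have hslice (p : ℝ) : ∫ y : (ℝ ∙ ω)ᗮ,
      Complex.exp (-(Complex.I * ((s * ⟪p • ω + y, ω⟫ : ℝ) : ℂ))) * u (p • ω + y) =
      Complex.exp (-(Complex.I * ((s * p : ℝ) : ℂ))) * radon u ω p := by
    simp_rw [inner_smul_add_orthogonal_of_norm_eq_one hω]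
    exact integral_const_mul _ _
  refine ⟨?_, hf, ?_⟩
  · simpa only [hslice] using hf.integral_orthogonal_slice hω
  · simp only [integral_eq_integral_integral_orthogonal_slice hω hf, hslice]

end
end

section
/- Let ‖·‖ be a complex norm on ℂ^n and let E = { ζ ∈ ℂ^n : ‖ζ‖ ≤ 1 } be its closed unit ball. Then Siciak's homogeneous extremal function of E satisfies Ψ_E(ζ) = ‖ζ‖ for every ζ ∈ ℂ^n. -/
open scoped ENNReal RealInnerProductSpace BigOperators
open Filter MeasureTheory

/-! For a homogeneous polynomial `p` of degree `k ≥ 1`, `z ↦ |p z|^(1/k)` is absolutely homogeneous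
of degree one, so rescaling `ζ` into the unit ball of `ν` turns the bound `|p|^(1/k) ≤ 1` there into
`|p ζ|^(1/k) ≤ ν ζ`. Conversely, Hahn–Banach gives a linear form `L` with `|L| ≤ ν` and
`L ζ = ν ζ`, and `L` is a homogeneous polynomial of degree one attaining the value `ν ζ`. -/

namespace MvPolynomial.IsHomogeneous

theorem eval_smul {σ R : Type*} [CommSemiring R] {φ : MvPolynomial σ R} {k : ℕ}
    (hφ : φ.IsHomogeneous k) (c : R) (x : σ → R) : eval (c • x) φ = c ^ k * eval x φ := by
  rw [eval_eq, eval_eq, Finset.mul_sum]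
  refine Finset.sum_congr rfl fun d hd => ?_
  simp_rw [Pi.smul_apply, smul_eq_mul, mul_pow, Finset.prod_mul_distrib, Finset.prod_pow_eq_pow_sum,
    ← hφ.degree_eq_sum_deg_support hd]
  ring

end MvPolynomial.IsHomogeneous

theorem Seminorm.exists_dual_le_apply_eq {𝕜 V : Type*} [RCLike 𝕜] [AddCommGroup V] [Module 𝕜 V]
    (ν : Seminorm 𝕜 V) (x : V) : ∃ g : Module.Dual 𝕜 V, (∀ y, ‖g y‖ ≤ ν y) ∧ g x = ν x := by
  rcases eq_or_ne x 0 with rfl | hx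
  · exact ⟨0, fun y => by simp, by simp⟩
  let f : Module.Dual 𝕜 (𝕜 ∙ x) := (ν x : 𝕜) • LinearEquiv.coord 𝕜 V x hx
  have hf : ∀ y, ‖f y‖ ≤ ν y := fun y => by
    conv_rhs => rw [← LinearEquiv.coord_apply_smul 𝕜 V x hx y, map_smul_eq_mul]
    simp [f, norm_smul, abs_of_nonneg (apply_nonneg ν x), mul_comm]
  obtain ⟨g, hgf, hg⟩ := Module.Dual.exists_extension_of_le_seminorm _ f hf
  refine ⟨g, hg, ?_⟩
  simpa [f, LinearEquiv.coord_self, RCLike.real_smul_eq_coe_mul] using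
    hgf ⟨x, Submodule.mem_span_singleton_self x⟩

theorem Seminorm.le_of_homogeneous_of_le_one {𝕜 V : Type*} [RCLike 𝕜] [AddCommGroup V] [Module 𝕜 V]
    (ν : Seminorm 𝕜 V) {g : V → ℝ} (hg : ∀ (c : 𝕜) z, g (c • z) = ‖c‖ * g z)
    (hle : ∀ z, ν z ≤ 1 → g z ≤ 1) (z : V) : g z ≤ ν z := by
  refine le_of_forall_gt_imp_ge_of_dense fun r hr => ?_
  have hr0 : 0 < r := (apply_nonneg ν z).trans_lt hr
  have hnorm : ‖((r⁻¹ : ℝ) : 𝕜)‖ = r⁻¹ := by simp [hr0.le]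
  have hscaled := hle (((r⁻¹ : ℝ) : 𝕜) • z) <| by
    rw [map_smul_eq_mul, hnorm, inv_mul_le_one₀ hr0]
    exact hr.le
  rw [hg, hnorm, inv_mul_le_one₀ hr0] at hscaled
  exact hscaled

section evalP

variable {n k : ℕ} {p : MvPolynomial (Fin n) ℂ}

theorem MvPolynomial.IsHomogeneous.evalP_smul (hp : p.IsHomogeneous k) (c : ℂ) (z : Cn n) :
    evalP p (c • z) = c ^ k * evalP p z :=
  hp.eval_smul c (fun i => z i)

theorem MvPolynomial.IsHomogeneous.norm_evalP_smul_rpow (hp : p.IsHomogeneous k) (hk : k ≠ 0)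
    (c : ℂ) (z : Cn n) :
    ‖evalP p (c • z)‖ ^ (1 / (k : ℝ)) = ‖c‖ * ‖evalP p z‖ ^ (1 / (k : ℝ)) := by
  rw [hp.evalP_smul, norm_mul, norm_pow, Real.mul_rpow (by positivity) (norm_nonneg _),
    ← Real.rpow_natCast, ← Real.rpow_mul (norm_nonneg _), mul_one_div_cancel (by exact_mod_cast hk),
    Real.rpow_one]

theorem exists_isHomogeneous_one_evalP_eq (L : Module.Dual ℂ (Cn n)) :
    ∃ p : MvPolynomial (Fin n) ℂ, p.IsHomogeneous 1 ∧ ∀ z, evalP p z = L z := by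
  refine ⟨∑ i, MvPolynomial.C (L (EuclideanSpace.single i 1)) * MvPolynomial.X i,
    MvPolynomial.IsHomogeneous.sum _ _ _ fun i _ => MvPolynomial.isHomogeneous_C_mul_X _ i,
    fun z => ?_⟩
  conv_rhs => rw [← (EuclideanSpace.basisFun (Fin n) ℂ).sum_repr z]
  simp [evalP, mul_comm]

end evalP

theorem siciak_of_complex_unit_ball_general {n : ℕ} (ν : Cn n → ℝ)
    (hν1 : ∀ (c : ℂ) (z : Cn n), ν (c • z) = ‖c‖ * ν z)
    (hν2 : ∀ z w : Cn n, ν (z + w) ≤ ν z + ν w) :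
    ∀ ζ : Cn n,
      siciak {z : Cn n | ν z ≤ 1} (fun _ => 1) ζ = ENNReal.ofReal (ν ζ) := by
  intro ζ
  let νₛ : Seminorm ℂ (Cn n) := .of ν hν2 hν1
  apply le_antisymm
  · refine iSup_le fun p => iSup_le fun k => iSup_le fun hp => iSup_le fun hk =>
      iSup_le fun hE => ENNReal.ofReal_le_ofReal ?_
    exact νₛ.le_of_homogeneous_of_le_one (hp.norm_evalP_smul_rpow (by omega)) hE ζ
  · obtain ⟨L, hL, hLζ⟩ := νₛ.exists_dual_le_apply_eq ζ
    obtain ⟨p, hp, hpL⟩ := exists_isHomogeneous_one_evalP_eq L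
    have hpζ : ‖evalP p ζ‖ = ν ζ := by
      rw [hpL, hLζ, RCLike.norm_ofReal, abs_of_nonneg (apply_nonneg νₛ ζ)]
      rfl
    refine le_iSup_of_le p <| le_iSup_of_le 1 <| le_iSup_of_le hp <| le_iSup_of_le le_rfl <|
      le_iSup_of_le (fun ξ hξ => ?_) ?_
    · simpa [hpL] using (hL ξ).trans hξ
    · simp [hpζ]

/-- Proposition 2.4: if `E` is the closed unit ball of a complex norm `ν` on ℂⁿ, then
`Ψ_E(ζ) = ν(ζ)`. -/
theorem siciak_of_complex_unit_ball {n : ℕ} (ν : Cn n → ℝ)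
    (hν1 : ∀ (c : ℂ) (z : Cn n), ν (c • z) = ‖c‖ * ν z)
    (hν2 : ∀ z w : Cn n, ν (z + w) ≤ ν z + ν w)
    (hν3 : ∀ z : Cn n, ν z = 0 → z = 0) :
    ∀ ζ : Cn n,
      siciak {z : Cn n | ν z ≤ 1} (fun _ => 1) ζ = ENNReal.ofReal (ν ζ) :=
  siciak_of_complex_unit_ball_general ν hν1 hν2
end
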